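/- arXiv:2103.06203 — 3 statements merged into one kernel-verified Lean document; each statement's English description precedes it below -/
import Mathlib

section
/- Let $p \geq 1$ and $g_1,\dots,g_p \geq 1$ be integers. Let $G$ be a normal $\mathbb{Q}$-algebraic subgroup of $\prod_{q=1}^{p} (\mathbb{G}_{a,\mathbb{Q}}^{2g_q} \rtimes \mathrm{SL}_{2,\mathbb{Q}})$ (where each copy of $\mathrm{SL}_2$ acts diagonally on the corresponding $\mathbb{G}_a^{2g_q} = (\mathbb{G}_a^2)^{g_q}$ via the standard representation) such that $G$ projects surjectively onto $\mathrm{SL}_{2,\mathbb{Q}}^{p}$. Then $G$ equals the whole group $\prod_{q=1}^{p} (\mathbb{G}_{a,\mathbb{Q}}^{2g_q} \rtimes \mathrm{SL}_{2,\mathbb{Q}})$. -/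
/-! Statement 0: a normal (ℚ-points of a) subgroup of
`∏ q, (𝔾ₐ^{2 g_q} ⋊ SL₂)` over ℚ that surjects onto `SL₂^p` is everything. -/

open Matrix

/-- The group `SL₂(ℚ)`. -/
abbrev SL2Q := Matrix.SpecialLinearGroup (Fin 2) ℚ

/-- The diagonal action of `SL₂(ℚ)` on `(ℚ²)^n`, each factor by the standard
representation, as additive automorphisms. -/
noncomputable def diagActQ (n : ℕ) : SL2Q →* Multiplicative (AddAut (Fin n → Fin 2 → ℚ)) where
  toFun γ := Multiplicative.ofAdd (AddEquiv.piCongrRight fun _ : Fin n =>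
    (Matrix.SpecialLinearGroup.toLin' γ).toAddEquiv)
  map_one' := by apply Multiplicative.toAdd.injective; ext v i; simp
  map_mul' := by intro a b; apply Multiplicative.toAdd.injective; ext v i; simp

/-- The same action, as multiplicative automorphisms of the (multiplicatively
written) group `(ℚ²)^n`. -/
noncomputable def diagActQMul (n : ℕ) :
    SL2Q →* MulAut (Multiplicative (Fin n → Fin 2 → ℚ)) where
  toFun γ := AddEquiv.toMultiplicative (Multiplicative.toAdd (diagActQ n γ))
  map_one' := by ext v; simp
  map_mul' := by intro a b; ext v; simp

/-- The ambient group `∏_{q<p} (𝔾ₐ^{2 g q} ⋊ SL₂)(ℚ)`, each `SL₂` acting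
diagonally on the corresponding `(𝔾ₐ²)^{g q}` by the standard representation. -/
abbrev AmbientGroup (p : ℕ) (g : Fin p → ℕ) :=
  ∀ q : Fin p, (Multiplicative (Fin (g q) → Fin 2 → ℚ)) ⋊[diagActQMul (g q)] SL2Q

/-- The projection of the ambient group onto `SL₂(ℚ)^p`, killing the unipotent
radical `∏_q 𝔾ₐ^{2 g q}`. -/
noncomputable def projSL (p : ℕ) (g : Fin p → ℕ) : AmbientGroup p g →* (Fin p → SL2Q) :=
  Pi.monoidHom fun q => SemidirectProduct.rightHom.comp (Pi.evalMonoidHom _ q)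

/-! Pick `x ∈ G` lying over `(-I, …, -I)`. Since `-I` acts on each `(ℚ²)^{g q}` by inversion,
the commutator of a unipotent element `u` with `x` is `u²`; as every vector over `ℚ` is twice
another one, `G` contains the whole unipotent radical, i.e. the kernel of `projSL`, and a subgroup
containing the kernel and surjecting onto the image is everything. -/

open scoped commutatorElement

theorem SemidirectProduct.commutatorElement_inl_of_act_eq_inv {N H : Type*} [CommGroup N] [Group H]
    {φ : H →* MulAut N} {x : N ⋊[φ] H} (hx : ∀ n, φ x.right n = n⁻¹) (n : N) :
    ⁅(inl n : N ⋊[φ] H), x⁆ = inl (n * n) := by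
  have hx_symm : ∀ n, (φ x.right).symm n = n⁻¹ := fun n =>
    (MulEquiv.symm_apply_eq _).2 (by rw [hx, inv_inv])
  ext
  · simp only [commutatorElement_def, mul_left, left_inl, right_inl, map_one, MulAut.one_apply,
      mul_right, one_mul, inv_left, inv_one, hx, inv_inv, inv_right, mul_one, map_inv,
      MulAut.inv_apply, hx_symm, map_mul]
    rw [mul_right_comm, mul_inv_cancel_right]
  · simp [commutatorElement_def]

theorem diagActQMul_neg_one (n : ℕ) (m : Multiplicative (Fin n → Fin 2 → ℚ)) :
    diagActQMul n (-1) m = m⁻¹ := by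
  ext i j
  simp [diagActQMul, diagActQ, Matrix.SpecialLinearGroup.toLin'_apply]

theorem Multiplicative.isSquare_of_module_rat {V : Type*} [AddCommGroup V] [Module ℚ V]
    (m : Multiplicative V) : IsSquare m :=
  ⟨.ofAdd ((2 : ℚ)⁻¹ • m.toAdd), by
    apply Multiplicative.toAdd.injective
    simp only [toAdd_mul, toAdd_ofAdd, ← add_smul]
    norm_num⟩

theorem Subgroup.Normal.pi_inl_mem_of_act_eq_inv {ι : Type*} {N H : ι → Type*}
    [∀ i, CommGroup (N i)] [∀ i, Group (H i)] {φ : ∀ i, H i →* MulAut (N i)}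
    {G : Subgroup (∀ i, N i ⋊[φ i] H i)} (hG : G.Normal) (hN : ∀ i (n : N i), IsSquare n)
    {x : ∀ i, N i ⋊[φ i] H i} (hxG : x ∈ G) (hx : ∀ i n, φ i (x i).right n = n⁻¹)
    (n : ∀ i, N i) : (fun i => SemidirectProduct.inl (n i)) ∈ G := by
  choose r hr using fun i => hN i (n i)
  have hcomm : ⁅(fun i => SemidirectProduct.inl (r i) : ∀ i, N i ⋊[φ i] H i), x⁆ =
      fun i => SemidirectProduct.inl (n i) := by
    funext i
    rw [hr i, ← SemidirectProduct.commutatorElement_inl_of_act_eq_inv (hx i)]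
    rfl
  rw [← hcomm]
  exact mul_mem (hG.conj_mem x hxG _) (inv_mem hxG)

theorem ker_projSL_le {p : ℕ} {g : Fin p → ℕ} {G : Subgroup (AmbientGroup p g)} (hG : G.Normal)
    {x : AmbientGroup p g} (hxG : x ∈ G) (hx : projSL p g x = -1) : (projSL p g).ker ≤ G := by
  intro k hk
  have hk_eq : k = fun q => SemidirectProduct.inl (k q).left := by
    funext q
    ext : 1
    · rfl
    · exact congrFun hk q
  rw [hk_eq]
  refine hG.pi_inl_mem_of_act_eq_inv (fun _ => Multiplicative.isSquare_of_module_rat) hxG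
    (fun q => ?_) _
  rw [show (x q).right = -1 from congrFun hx q]
  exact diagActQMul_neg_one _

theorem normal_subgroup_projecting_onto_SL2_pow_is_top_general
    (p : ℕ) (g : Fin p → ℕ)
    (G : Subgroup (AmbientGroup p g)) (hnorm : G.Normal)
    (hsurj : G.map (projSL p g) = ⊤) :
    G = ⊤ := by
  obtain ⟨x, hxG, hx⟩ : ∃ x ∈ G, projSL p g x = -1 :=
    Subgroup.mem_map.1 (hsurj ▸ Subgroup.mem_top _)
  rw [← Subgroup.comap_map_eq_self (ker_projSL_le hnorm hxG hx), hsurj, Subgroup.comap_top]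

/-- If `G` is a normal subgroup of
`∏_{q=1}^p (𝔾ₐ^{2 g_q} ⋊ SL₂)` (over ℚ) projecting onto `SL₂^p`,
then `G` is the whole group. -/
theorem normal_subgroup_projecting_onto_SL2_pow_is_top
    (p : ℕ) (hp : 1 ≤ p) (g : Fin p → ℕ) (hg : ∀ q, 1 ≤ g q)
    (G : Subgroup (AmbientGroup p g)) (hnorm : G.Normal)
    (hsurj : G.map (projSL p g) = ⊤) :
    G = ⊤ :=
  normal_subgroup_projecting_onto_SL2_pow_is_top_general p g G hnorm hsurj
end

section
/- Let $\gamma = ((m,n), \begin{pmatrix} a & b \\ c & d \end{pmatrix}) \in \mathbb{Z}^2 \rtimes \mathrm{SL}_2(\mathbb{Z})$ act on $(z,\tau) \in \mathbb{C} \times \mathcal{H}_1$ by $(z,\tau) \mapsto \left(\frac{z+m+n\tau}{c\tau+d}, \frac{a\tau+b}{c\tau+d}\right)$, and write $(z',\tau')$ for the image. Define $y = \mathrm{Im}(z)/\mathrm{Im}(\tau)$ and $y' = \mathrm{Im}(z')/\mathrm{Im}(\tau')$. Then the smooth $(1,1)$-form $\omega = \frac{i}{\mathrm{Im}(\tau)}(dz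 - y\, d\tau) \wedge (d\bar z - y\, d\bar\tau)$ on $\mathbb{C} \times \mathcal{H}_1$ is invariant under this action, i.e., the pullback of $\omega$ under the action of $\gamma$ equals $\omega$. -/
open Complex

/-! Statement 5: the smooth (1,1)-form
`ω = (i/Im τ) (dz - y dτ) ∧ (d z̄ - y d τ̄)`, `y = Im z / Im τ`, on `ℂ × ℍ₁`
is invariant under the action of `ℤ² ⋊ SL₂(ℤ)`.  We express `ω` at a point
`p = (z,τ)` as the alternating form on tangent vectors
`ω_p(u,v) = (i/Im τ)(η_p(u) conj(η_p(v)) - η_p(v) conj(η_p(u)))`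
with `η_p(u) = u₁ - y u₂`, and invariance as the statement that the pullback
of `ω` along the (real) derivative of the action map equals `ω`. -/

/-- `η_p(u) = dz(u) - y dτ(u)` at the point `p = (z,τ)`, `y = Im z / Im τ`. -/
noncomputable def etaForm (p : ℂ × ℂ) (u : ℂ × ℂ) : ℂ :=
  u.1 - ((p.1.im / p.2.im : ℝ) : ℂ) * u.2

/-- The `(1,1)`-form `ω = (i / Im τ) (dz - y dτ) ∧ (dz̄ - y dτ̄)` evaluated at
the point `p` on the pair of tangent vectors `(u, v)`. -/
noncomputable def omegaForm (p : ℂ × ℂ) (u v : ℂ × ℂ) : ℂ :=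
  (Complex.I / (p.2.im : ℂ)) *
    (etaForm p u * (starRingEnd ℂ) (etaForm p v) -
      etaForm p v * (starRingEnd ℂ) (etaForm p u))

/-- The action of the element `((m,n), [[a,b],[c,d]])` of `ℤ² ⋊ SL₂(ℤ)` on
`ℂ × ℍ₁ ⊆ ℂ × ℂ`. -/
noncomputable def gammaAction (m n a b c d : ℤ) (p : ℂ × ℂ) : ℂ × ℂ :=
  ((p.1 + m + n * p.2) / (c * p.2 + d), ((a : ℂ) * p.2 + b) / (c * p.2 + d))

open ComplexConjugate

/-! Write `z = x + τ y` with `x, y` real. Then `z' = x' + τ' y'` with `x' = a(x+m) - b(y+n)` and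
`y' = d(y+n) - c(x+m)`; substituting this `y'` into `η = dz - y dτ` gives `η' = η / (cτ+d)`.
Since also `Im τ' = Im τ / |cτ+d|²`, the factors `cτ+d` cancel in `ω`. -/

lemma Complex.eq_ofReal_add_mul_ofReal {z τ : ℂ} (hτ : τ.im ≠ 0) :
    z = ↑(z.re - z.im / τ.im * τ.re) + τ * ↑(z.im / τ.im) := by
  apply Complex.ext <;> simp [field]

lemma Complex.im_div_im_of_eq_ofReal_add_mul_ofReal {w σ : ℂ} {x y : ℝ} (hσ : σ.im ≠ 0)
    (h : w = x + σ * y) : w.im / σ.im = y := by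
  simp [h, field]

lemma intCast_mul_add_ne_zero {τ : ℂ} (hτ : τ.im ≠ 0) {c d : ℤ} (hcd : c ≠ 0 ∨ d ≠ 0) :
    (c : ℂ) * τ + d ≠ 0 := by
  intro h
  have hc : c = 0 := by simpa [hτ] using congrArg Complex.im h
  simp_all

section
variable {m n a b c d : ℤ} {p : ℂ × ℂ}

lemma im_gammaAction_snd (hdet : a * d - b * c = 1) :
    (gammaAction m n a b c d p).2.im = p.2.im / normSq (c * p.2 + d) := by
  have hdet' : (a : ℝ) * d - b * c = 1 := by exact_mod_cast hdet
  simp only [gammaAction, div_im, add_im, mul_im, add_re, mul_re, intCast_re, intCast_im,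
    zero_mul, add_zero, sub_zero]
  rw [← sub_div]
  congr 1
  linear_combination p.2.im * hdet'

lemma gammaAction_fst_eq (hdet : a * d - b * c = 1) (hj : (c : ℂ) * p.2 + d ≠ 0) {x y : ℝ}
    (hz : p.1 = x + p.2 * y) :
    (gammaAction m n a b c d p).1 =
      ↑(a * (x + m) - b * (y + n)) +
        (gammaAction m n a b c d p).2 * ↑(d * (y + n) - c * (x + m)) := by
  have hdet' : (a : ℂ) * d - b * c = 1 := by exact_mod_cast hdet
  simp only [gammaAction]
  rw [div_mul_eq_mul_div, add_div' _ _ _ hj, div_left_inj' hj]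
  push_cast
  rw [hz]
  linear_combination -(↑x + ↑m + p.2 * (↑y + ↑n)) * hdet'

lemma differentiableAt_gammaAction (hj : (c : ℂ) * p.2 + d ≠ 0) :
    DifferentiableAt ℂ (gammaAction m n a b c d) p := by
  unfold gammaAction
  fun_prop (disch := exact hj)

lemma hasLineDerivAt_gammaAction (hj : (c : ℂ) * p.2 + d ≠ 0) (w : ℂ × ℂ) :
    HasLineDerivAt ℂ (gammaAction m n a b c d)
      (((w.1 + n * w.2) * (c * p.2 + d) - (p.1 + m + n * p.2) * (c * w.2)) / (c * p.2 + d) ^ 2,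
        (a * w.2 * (c * p.2 + d) - (a * p.2 + b) * (c * w.2)) / (c * p.2 + d) ^ 2) p w := by
  have hline : ∀ u v : ℂ, HasDerivAt (fun t : ℂ => u + t * v) v 0 := fun u v => by
    simpa using ((hasDerivAt_id (0 : ℂ)).mul_const v).const_add u
  have hz := ((hline p.1 w.1).add_const (m : ℂ)).add ((hline p.2 w.2).const_mul (n : ℂ))
  have hτ := fun (e f : ℤ) => ((hline p.2 w.2).const_mul (e : ℂ)).add_const (f : ℂ)
  have := (hz.div (hτ c d) (by simpa using hj)).prodMk ((hτ a b).div (hτ c d) (by simpa using hj))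
  unfold HasLineDerivAt gammaAction
  simpa using this

lemma fderiv_gammaAction_apply (hj : (c : ℂ) * p.2 + d ≠ 0) (w : ℂ × ℂ) :
    fderiv ℝ (gammaAction m n a b c d) p w =
      (((w.1 + n * w.2) * (c * p.2 + d) - (p.1 + m + n * p.2) * (c * w.2)) / (c * p.2 + d) ^ 2,
        (a * w.2 * (c * p.2 + d) - (a * p.2 + b) * (c * w.2)) / (c * p.2 + d) ^ 2) := by
  rw [(differentiableAt_gammaAction hj).fderiv_restrictScalars ℝ,
    ContinuousLinearMap.coe_restrictScalars',
    ← (differentiableAt_gammaAction hj).lineDeriv_eq_fderiv,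
    (hasLineDerivAt_gammaAction hj w).lineDeriv]

lemma etaForm_gammaAction (hdet : a * d - b * c = 1) (hτ : p.2.im ≠ 0)
    (hj : (c : ℂ) * p.2 + d ≠ 0) (w : ℂ × ℂ) :
    etaForm (gammaAction m n a b c d p) (fderiv ℝ (gammaAction m n a b c d) p w) =
      etaForm p w / (c * p.2 + d) := by
  have hdet' : (a : ℂ) * d - b * c = 1 := by exact_mod_cast hdet
  have hτ' : (gammaAction m n a b c d p).2.im ≠ 0 := by
    rw [im_gammaAction_snd hdet]
    exact div_ne_zero hτ (normSq_pos.2 hj).ne'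
  have hz : p.1 = ↑(p.1.re - p.1.im / p.2.im * p.2.re) + p.2 * ↑(p.1.im / p.2.im) :=
    Complex.eq_ofReal_add_mul_ofReal hτ
  rw [fderiv_gammaAction_apply hj, etaForm, etaForm,
    Complex.im_div_im_of_eq_ofReal_add_mul_ofReal hτ' (gammaAction_fst_eq hdet hj hz)]
  generalize p.1.re - p.1.im / p.2.im * p.2.re = x at hz ⊢
  generalize p.1.im / p.2.im = y at hz ⊢
  push_cast
  field_simp
  rw [hz]
  linear_combination -w.2 * (d * (y + n) - c * (x + m)) * hdet'
end

/-- The form `ω` is invariant under `ℤ² ⋊ SL₂(ℤ)`: for every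
group element, the pullback of `ω` under the differential of the action map
equals `ω` at every point of `ℂ × ℍ₁`. -/
theorem omegaForm_invariant (m n a b c d : ℤ) (hdet : a * d - b * c = 1)
    (p : ℂ × ℂ) (hp : 0 < p.2.im) (u v : ℂ × ℂ) :
    omegaForm (gammaAction m n a b c d p)
        (fderiv ℝ (gammaAction m n a b c d) p u)
        (fderiv ℝ (gammaAction m n a b c d) p v)
      = omegaForm p u v := by
  have hcd : c ≠ 0 ∨ d ≠ 0 := by
    by_contra! h
    simp [h.1, h.2] at hdet
  have hj := intCast_mul_add_ne_zero hp.ne' hcd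
  have hj' : conj ((c : ℂ) * p.2 + d) ≠ 0 := (map_ne_zero _).2 hj
  simp only [omegaForm]
  rw [etaForm_gammaAction hdet hp.ne' hj, etaForm_gammaAction hdet hp.ne' hj,
    im_gammaAction_snd hdet]
  push_cast
  rw [← Complex.mul_conj]
  simp only [map_div₀]
  field_simp
end

section
/- Let $d \geq 1$, $g = d+1$, and let $z_1,\dots,z_g : B_1(0)^d \to \mathbb{C}$ be holomorphic functions on the unit polydisc. Suppose that for each $j \in \{1,\dots,g-1\}$ there exists a nonzero constant $f_j' \in \mathbb{C}^\times$ such that $\det\left(\left(\partial z_l/\partial w_m\right)_{l \neq j,\; m}\right) = f_j' \cdot \det\left(\left(\partial z_l/\partial w_m\right)_{l \neq g,\; m}\right)$ on $B_1(0)^d$, and that $\det\left(\left(\partial z_l/\partial w_m\right)_{l \in \{1,\dots,g-1\},\; m}\right)$ is not identically zero. Then there exist constants $f_1,\dots,f_{g-1} \in \mathbb{C}$ and $b \in \mathbb{C}$ such that $f_1 z_1 + \cdots + f_{g-1} z_{g-1} + z_g = b$ identically on $B_1(0)^d$. -/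
open Complex

/-- The open unit polydisc in `ℂ^d`. -/
def polydisc (d : ℕ) : Set (Fin d → ℂ) := {w | ∀ j, ‖w j‖ < 1}

/-- The partial derivative `∂ z_l / ∂ w_m` at `w`. -/
noncomputable def pder {d : ℕ} (zl : (Fin d → ℂ) → ℂ) (m : Fin d) (w : Fin d → ℂ) : ℂ :=
  fderiv ℂ zl w (Pi.single m 1)

/-- The `d × d` Jacobian minor of `z : Fin (d+1) → ((Fin d → ℂ) → ℂ)`
omitting the `j`-th function: rows indexed by `l ≠ j`, columns by `m`. -/
noncomputable def jacMinor {d : ℕ} (z : Fin (d + 1) → (Fin d → ℂ) → ℂ)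
    (j : Fin (d + 1)) (w : Fin d → ℂ) : Matrix (Fin d) (Fin d) ℂ :=
  Matrix.of fun l m => pder (z (j.succAbove l)) m w

/-!
Prepending to the `(d + 1) × d` Jacobian a copy of its column `m` and expanding the determinant
along the first column shows that the signed maximal minors of the Jacobian are a left null vector
of it. Under the proportionality hypothesis this null vector is the last minor `D` times a
constant vector, so `D · dF = 0` for the linear combination `F` with those constant coefficients.
Since `D` is continuous (holomorphic functions have continuous partial derivatives) and
`D(w₀) ≠ 0`, `dF` vanishes near `w₀`; hence `F` is constant near `w₀`, and by the identity
theorem along complex lines it is constant on the whole polydisc.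
-/

open Metric Set Filter Topology

section Holomorphic

variable {E G : Type*} [NormedAddCommGroup E] [NormedSpace ℂ E]
  [NormedAddCommGroup G] [NormedSpace ℂ G] [CompleteSpace G]

/-- Joint continuity gives uniform convergence on the closed disc as `x → x₀`, and Weierstrass's
theorem passes it on to the derivatives. -/
theorem continuousAt_deriv_of_continuousOn_uncurry {X : Type*} [UniformSpace X]
    [LocallyCompactSpace X] {F : X → ℂ → G} {x₀ : X} {s : Set X} {c : ℂ} {r : ℝ}
    (hs : s ∈ 𝓝 x₀) (hr : 0 < r) (hF : ContinuousOn ↿F (s ×ˢ closedBall c r))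
    (hFd : ∀ x ∈ s, DifferentiableOn ℂ (F x) (ball c r)) :
    ContinuousAt (fun x => deriv (F x) c) x₀ := by
  obtain ⟨K, hK, hKs, hKc⟩ := local_compact_nhds hs
  have hunif : TendstoUniformlyOn F (F x₀) (𝓝 x₀) (ball c r) := by
    have := ((hKc.prod (isCompact_closedBall c r)).uniformContinuousOn_of_continuous
      (hF.mono (prod_mono hKs subset_rfl))).tendstoUniformlyOn (mem_of_mem_nhds hK)
    rw [nhdsWithin_eq_nhds.2 hK] at this
    exact this.mono ball_subset_closedBall
  exact (hunif.tendstoLocallyUniformlyOn.deriv (eventually_of_mem hs hFd) isOpen_ball).tendsto_at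
    (mem_ball_self hr)

/-- `fderiv ℂ f x v` is the derivative at `0` of `t ↦ f (x + t • v)`, a family to which
`continuousAt_deriv_of_continuousOn_uncurry` applies. -/
theorem DifferentiableOn.continuousOn_fderiv_apply [LocallyCompactSpace E] {f : E → G}
    {s : Set E} (hf : DifferentiableOn ℂ f s) (hs : IsOpen s) (v : E) :
    ContinuousOn (fun x => fderiv ℂ f x v) s := by
  intro x₀ hx₀
  have hline : IsOpen {p : E × ℂ | p.1 + p.2 • v ∈ s} := hs.preimage (by fun_prop)
  obtain ⟨u, hu, V, hV, huV⟩ :=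
    mem_nhds_prod_iff.1 (hline.mem_nhds (x := (x₀, 0)) (by simpa using hx₀))
  obtain ⟨r, hr, hrV⟩ := Metric.mem_nhds_iff.1 hV
  have hmaps : ∀ x ∈ u, ∀ t ∈ closedBall (0 : ℂ) (r / 2), x + t • v ∈ s := fun x hx t ht =>
    huV (a := (x, t)) ⟨hx, hrV (closedBall_subset_ball (half_lt_self hr) ht)⟩
  have hcont : ContinuousAt (fun x => lineDeriv ℂ f x v) x₀ :=
    continuousAt_deriv_of_continuousOn_uncurry (F := fun x t => f (x + t • v)) hu (half_pos hr)
      (hf.continuousOn.comp (by fun_prop) fun p hp => hmaps p.1 hp.1 p.2 hp.2)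
      fun x hx t ht => ((hf.differentiableAt (hs.mem_nhds
        (hmaps x hx t (ball_subset_closedBall ht)))).comp t (by fun_prop)).differentiableWithinAt
  refine (hcont.congr (eventually_of_mem (hs.mem_nhds hx₀) fun x hx => ?_)).continuousWithinAt
  exact (hf.differentiableAt (hs.mem_nhds hx)).lineDeriv_eq_fderiv

/-- Restrict to the complex line through `x₀` and `x`, where the one-variable identity theorem
applies. -/
theorem Convex.eqOn_of_differentiableOn_of_eventuallyEq {f g : E → G} {U : Set E} {x₀ : E}
    (hUc : Convex ℝ U) (hUo : IsOpen U) (hf : DifferentiableOn ℂ f U)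
    (hg : DifferentiableOn ℂ g U) (hx₀ : x₀ ∈ U) (hfg : f =ᶠ[𝓝 x₀] g) : EqOn f g U := by
  intro x hx
  set L : ℂ → E := fun t => x₀ + t • (x - x₀)
  have hL : Continuous L := by fun_prop
  have hLd : Differentiable ℂ L := by fun_prop
  have hT : Convex ℝ (L ⁻¹' U) :=
    (hUc.translate_preimage_right x₀).is_linear_preimage
      (((LinearMap.id : ℂ →ₗ[ℂ] ℂ).smulRight (x - x₀)).restrictScalars ℝ).isLinear
  have hTo : IsOpen (L ⁻¹' U) := hUo.preimage hL
  have hfgL : f ∘ L =ᶠ[𝓝 0] g ∘ L := hfg.comp_tendsto (by simpa [L] using hL.tendsto 0)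
  have := (hf.comp hLd.differentiableOn (mapsTo_preimage L U)).analyticOnNhd hTo
    |>.eqOn_of_preconnected_of_eventuallyEq
      ((hg.comp hLd.differentiableOn (mapsTo_preimage L U)).analyticOnNhd hTo) hT.isPreconnected
      (by simpa [L] using hx₀) hfgL (show (1 : ℂ) ∈ L ⁻¹' U by simpa [L] using hx)
  simpa [L] using this

theorem Convex.eqOn_const_of_fderiv_eventuallyEq_zero {f : E → G} {U : Set E} {x₀ : E}
    (hUc : Convex ℝ U) (hUo : IsOpen U) (hf : DifferentiableOn ℂ f U) (hx₀ : x₀ ∈ U)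
    (hf' : fderiv ℂ f =ᶠ[𝓝 x₀] 0) : EqOn f (fun _ => f x₀) U := by
  obtain ⟨ε, hε, hball⟩ := Metric.eventually_nhds_iff_ball.1 (hf'.and (hUo.mem_nhds hx₀))
  refine hUc.eqOn_of_differentiableOn_of_eventuallyEq hUo hf (differentiableOn_const _) hx₀ ?_
  exact eventually_of_mem (ball_mem_nhds x₀ hε) fun x hx =>
    isOpen_ball.is_const_of_fderiv_eq_zero (convex_ball x₀ ε).isPreconnected
      (hf.mono fun y hy => (hball y hy).2) (fun y hy => (hball y hy).1) hx (mem_ball_self hε)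

end Holomorphic

namespace Matrix

variable {R : Type*} [CommRing R] {n : ℕ}

/-- Laplace expansion along column `0` of `M` with its column `m` prepended, a matrix with two
equal columns. -/
theorem vecMul_alternating_det_submatrix_succAbove (M : Matrix (Fin (n + 1)) (Fin n) R) :
    (fun l : Fin (n + 1) => (-1) ^ (l : ℕ) * (M.submatrix l.succAbove id).det) ᵥ* M = 0 := by
  funext m
  let N : Matrix (Fin (n + 1)) (Fin (n + 1)) R := of fun l => Fin.cons (M l m) (M l)
  have hN : N.det = 0 := det_zero_of_column_eq (Fin.succ_ne_zero m).symm fun l => by simp [N]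
  have hminor (l : Fin (n + 1)) : N.submatrix l.succAbove Fin.succ = M.submatrix l.succAbove id :=
    by ext; simp [N]
  rw [det_succ_column_zero] at hN
  simpa [vecMul, dotProduct, N, hminor, mul_comm, mul_left_comm, mul_assoc] using hN

theorem det_mul_sum_eq_zero_of_det_submatrix_eq (M : Matrix (Fin (n + 1)) (Fin n) R)
    (c : Fin n → R)
    (hc : ∀ j, (M.submatrix j.castSucc.succAbove id).det =
      c j * (M.submatrix (Fin.last n).succAbove id).det) (m : Fin n) :
    (M.submatrix (Fin.last n).succAbove id).det *
      (∑ j : Fin n, (-1) ^ ((j : ℕ) + n) * c j * M j.castSucc m + M (Fin.last n) m) = 0 := by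
  have h := congrFun (vecMul_alternating_det_submatrix_succAbove M) m
  simp only [vecMul, dotProduct, Fin.sum_univ_castSucc, hc, Fin.val_castSucc, Fin.val_last,
    Pi.zero_apply] at h
  have hsq : (-1 : R) ^ n * (-1) ^ n = 1 := by
    rw [← pow_add, ← two_mul, pow_mul, neg_one_sq, one_pow]
  rw [← mul_zero ((-1 : R) ^ n), ← h, mul_add, Finset.mul_sum, mul_add, Finset.mul_sum]
  congr 1
  · exact Finset.sum_congr rfl fun j _ => by ring
  · linear_combination -(M.submatrix (Fin.last n).succAbove id).det * M (Fin.last n) m * hsq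

end Matrix

theorem polydisc_eq_ball (d : ℕ) : polydisc d = ball 0 1 := by
  ext w
  simp [polydisc, ball_pi _ one_pos]

section Jacobian

variable {d : ℕ} (z : Fin (d + 1) → (Fin d → ℂ) → ℂ)

noncomputable def jacobian (w : Fin d → ℂ) : Matrix (Fin (d + 1)) (Fin d) ℂ :=
  Matrix.of fun l m => pder (z l) m w

theorem jacMinor_eq_submatrix (j : Fin (d + 1)) (w : Fin d → ℂ) :
    jacMinor z j w = (jacobian z w).submatrix j.succAbove id :=
  rfl

theorem continuousOn_det_jacMinor {U : Set (Fin d → ℂ)} (hU : IsOpen U)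
    (hz : ∀ l, DifferentiableOn ℂ (z l) U) (j : Fin (d + 1)) :
    ContinuousOn (fun w => (jacMinor z j w).det) U :=
  continuous_id.matrix_det.comp_continuousOn <| continuousOn_pi.2 fun _ =>
    continuousOn_pi.2 fun _ => (hz _).continuousOn_fderiv_apply hU _

theorem det_jacMinor_mul_fderiv_eq_zero {w : Fin d → ℂ} (hz : ∀ l, DifferentiableAt ℂ (z l) w)
    (f' : Fin d → ℂ)
    (hf' : ∀ j, (jacMinor z j.castSucc w).det = f' j * (jacMinor z (Fin.last d) w).det)
    (m : Fin d) :
    (jacMinor z (Fin.last d) w).det * fderiv ℂ (fun w =>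
      (∑ j : Fin d, (-1) ^ ((j : ℕ) + d) * f' j * z j.castSucc w) + z (Fin.last d) w) w
        (Pi.single m 1) = 0 := by
  have hF := (HasFDerivAt.fun_sum (u := Finset.univ) fun (j : Fin d) _ =>
    (hz j.castSucc).hasFDerivAt.const_mul ((-1) ^ ((j : ℕ) + d) * f' j)).fun_add
      (hz (Fin.last d)).hasFDerivAt
  rw [hF.fderiv]
  simp only [jacMinor_eq_submatrix] at hf' ⊢
  convert (jacobian z w).det_mul_sum_eq_zero_of_det_submatrix_eq f' hf' m using 2
  simp [jacobian, pder]

end Jacobian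

theorem linear_relation_from_proportional_minors_general (d : ℕ)
    (z : Fin (d + 1) → (Fin d → ℂ) → ℂ)
    (hz : ∀ l, DifferentiableOn ℂ (z l) (polydisc d))
    (hprop : ∀ j : Fin d, ∃ f' : ℂ, f' ≠ 0 ∧ ∀ w ∈ polydisc d,
      (jacMinor z j.castSucc w).det = f' * (jacMinor z (Fin.last d) w).det)
    (hne : ∃ w ∈ polydisc d, (jacMinor z (Fin.last d) w).det ≠ 0) :
    ∃ (f : Fin d → ℂ) (b : ℂ), ∀ w ∈ polydisc d,
      (∑ j : Fin d, f j * z j.castSucc w) + z (Fin.last d) w = b := by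
  choose f' _ hf' using hprop
  obtain ⟨w₀, hw₀, hD₀⟩ := hne
  rw [polydisc_eq_ball] at hz hf' hw₀ ⊢
  set F := fun w => (∑ j : Fin d, (-1) ^ ((j : ℕ) + d) * f' j * z j.castSucc w) + z (Fin.last d) w
  have hzd : ∀ l, ∀ w ∈ ball (0 : Fin d → ℂ) 1, DifferentiableAt ℂ (z l) w := fun l w hw =>
    (hz l).differentiableAt (isOpen_ball.mem_nhds hw)
  have hFd : DifferentiableOn ℂ F (ball 0 1) := fun w hw =>
    ((DifferentiableAt.fun_sum fun j _ => (hzd _ w hw).const_mul _).add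
      (hzd _ w hw)).differentiableWithinAt
  have hD : ∀ᶠ w in 𝓝 w₀, (jacMinor z (Fin.last d) w).det ≠ 0 ∧ w ∈ ball 0 1 :=
    (((continuousOn_det_jacMinor z isOpen_ball hz _).continuousAt
      (isOpen_ball.mem_nhds hw₀)).eventually_ne hD₀).and (isOpen_ball.mem_nhds hw₀)
  have hdF : fderiv ℂ F =ᶠ[𝓝 w₀] 0 := hD.mono fun w ⟨hDw, hw⟩ =>
    ContinuousLinearMap.coe_injective <| (Pi.basisFun ℂ (Fin d)).ext fun m => by
      simpa [hDw] using det_jacMinor_mul_fderiv_eq_zero z (hzd · w hw) f' (hf' · w hw) m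
  exact ⟨_, F w₀, (convex_ball 0 1).eqOn_const_of_fderiv_eventuallyEq_zero isOpen_ball hFd hw₀ hdF⟩

theorem linear_relation_from_proportional_minors (d : ℕ) (hd : 1 ≤ d)
    (z : Fin (d + 1) → (Fin d → ℂ) → ℂ)
    (hz : ∀ l, DifferentiableOn ℂ (z l) (polydisc d))
    (hprop : ∀ j : Fin d, ∃ f' : ℂ, f' ≠ 0 ∧ ∀ w ∈ polydisc d,
      (jacMinor z j.castSucc w).det = f' * (jacMinor z (Fin.last d) w).det)
    (hne : ∃ w ∈ polydisc d, (jacMinor z (Fin.last d) w).det ≠ 0) :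
    ∃ (f : Fin d → ℂ) (b : ℂ), ∀ w ∈ polydisc d,
      (∑ j : Fin d, f j * z j.castSucc w) + z (Fin.last d) w = b :=
  linear_relation_from_proportional_minors_general d z hz hprop hne
end
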